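/- If G is an edge-transitive graph with greatest adjacency eigenvalue λ and least adjacency eigenvalue τ, then χ_vec(G) = θ̄(G) = 1 − λ/τ. -/

import Mathlib

/-!
In the first case the vertices incident to edges form a single orbit of the automorphism group, so
they all have the same degree `k ≤ lam`.
Averaging `x xᵀ` over the automorphism group, for a `τ`-eigenvector `x`, gives a PSD matrix `M`
with `A M = τ M` which, by edge-transitivity, is a negative constant `c` on edges; comparing
diagonals of `A M = τ M` gives `M v v = deg v · c / τ`, and `M / (-c)` padded on the diagonal is
feasible for `θ̄` with value `1 - lam / τ`.
Otherwise the two endpoints of an edge lie in different orbits, which two-colors the graph: the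
spectrum is then symmetric, `lam = -τ`, and the coloring's `±1` vector gives `θ̄ ≤ 2`.

The matching lower bound holds for every graph and is Hoffman's argument: for a `lam`-eigenvector
`x`, the Schur product of a feasible `M` with `A - τ I ⪰ 0`, evaluated at `|x|`, is nonnegative.
-/

/-- The vector chromatic number, as the optimal value of the SDP:
minimize `λ` subject to `M ⪰ 0`, `M_{vv} = λ - 1` for all `v`, and `M_{uv} ≤ -1`
on edges. -/
noncomputable def chiVecSDP {V : Type} [Fintype V] (G : SimpleGraph V) : ℝ :=
  sInf {lam : ℝ | ∃ M : Matrix V V ℝ, M.PosSemidef ∧ (∀ v, M v v = lam - 1) ∧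
    ∀ u v, G.Adj u v → M u v ≤ -1}

/-- The Lovász theta of the complement (strict vector chromatic number), as the
optimal value of the SDP: minimize `λ` subject to `M ⪰ 0`, `M_{vv} = λ - 1` for
all `v`, and `M_{uv} = -1` on edges. -/
noncomputable def thetaBarSDP {V : Type} [Fintype V] (G : SimpleGraph V) : ℝ :=
  sInf {lam : ℝ | ∃ M : Matrix V V ℝ, M.PosSemidef ∧ (∀ v, M v v = lam - 1) ∧
    ∀ u v, G.Adj u v → M u v = -1}

open Matrix

section LinearAlgebra

variable {n : Type} [Fintype n]

theorem Matrix.dotProduct_mulVec_le_of_le {N N' : Matrix n n ℝ} (h : ∀ i j, N i j ≤ N' i j)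
    {y : n → ℝ} (hy : 0 ≤ y) : y ⬝ᵥ N *ᵥ y ≤ y ⬝ᵥ N' *ᵥ y := by
  simp only [dotProduct, mulVec]
  gcongr with i _ j _
  · exact hy i
  · exact hy j
  · exact h i j

theorem Matrix.dotProduct_mulVec_le_abs {A : Matrix n n ℝ} (hA : ∀ i j, 0 ≤ A i j)
    (x : n → ℝ) : x ⬝ᵥ A *ᵥ x ≤ |x| ⬝ᵥ A *ᵥ |x| := by
  simp only [dotProduct, mulVec, Finset.mul_sum]
  refine Finset.sum_le_sum fun i _ => Finset.sum_le_sum fun j _ => ?_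
  calc x i * (A i j * x j) ≤ |x i * (A i j * x j)| := le_abs_self _
    _ = |x| i * (A i j * |x| j) := by simp [abs_mul, abs_of_nonneg (hA i j)]

variable [DecidableEq n]

theorem Matrix.IsHermitian.posSemidef_sub_smul_one {A : Matrix n n ℝ} (hA : A.IsHermitian)
    {τ : ℝ} (hτ : ∀ (μ : ℝ) (x : n → ℝ), x ≠ 0 → A *ᵥ x = μ • x → τ ≤ μ) :
    (A - τ • 1).PosSemidef := by
  have hB : (A - τ • 1).IsHermitian := hA.sub (isHermitian_one.smul (.all τ))
  refine hB.posSemidef_iff_eigenvalues_nonneg.mpr fun j => ?_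
  set v : n → ℝ := ⇑(hB.eigenvectorBasis j)
  have hv : v ≠ 0 := fun h => hB.eigenvectorBasis.toBasis.ne_zero j (by simpa [v] using h)
  have hAv : A *ᵥ v = (hB.eigenvalues j + τ) • v := by
    have := hB.mulVec_eigenvectorBasis j
    rw [sub_mulVec, smul_mulVec, one_mulVec] at this
    rw [add_smul, ← this, sub_add_cancel]
  simpa using hτ _ v hv hAv

theorem Matrix.PosSemidef.mul_dotProduct_self_le {A : Matrix n n ℝ} {τ : ℝ}
    (h : (A - τ • 1).PosSemidef) (x : n → ℝ) : τ * (x ⬝ᵥ x) ≤ x ⬝ᵥ A *ᵥ x := by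
  have := h.dotProduct_mulVec_nonneg x
  simp only [star_trivial, sub_mulVec, smul_mulVec, one_mulVec, dotProduct_sub,
    dotProduct_smul, smul_eq_mul] at this
  linarith

end LinearAlgebra

theorem chiVecSDP_eq_and_thetaBarSDP_eq {V : Type} [Fintype V] (G : SimpleGraph V) {r : ℝ}
    (hfeas : ∃ M : Matrix V V ℝ, M.PosSemidef ∧ (∀ v, M v v = r - 1) ∧
      ∀ u v, G.Adj u v → M u v = -1)
    (hlow : ∀ (s : ℝ) (M : Matrix V V ℝ), M.PosSemidef → (∀ v, M v v = s - 1) →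
      (∀ u v, G.Adj u v → M u v ≤ -1) → r ≤ s) :
    chiVecSDP G = r ∧ thetaBarSDP G = r := by
  obtain ⟨M, hM, hdiag, hedge⟩ := hfeas
  refine ⟨IsLeast.csInf_eq ⟨⟨M, hM, hdiag, fun u v h => (hedge u v h).le⟩, ?_⟩,
    IsLeast.csInf_eq ⟨⟨M, hM, hdiag, hedge⟩, ?_⟩⟩
  · rintro s ⟨N, hN, hNdiag, hNedge⟩
    exact hlow s N hN hNdiag hNedge
  · rintro s ⟨N, hN, hNdiag, hNedge⟩
    exact hlow s N hN hNdiag fun u v h => (hNedge u v h).le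

namespace SimpleGraph

variable {V : Type} (G : SimpleGraph V)

def IsEdgeTransitive : Prop :=
  ∀ ⦃u v x y : V⦄, G.Adj u v → G.Adj x y →
    ∃ f : G ≃g G, (f u = x ∧ f v = y) ∨ (f u = y ∧ f v = x)

instance Iso.finite {W : Type} [Finite V] [Finite W] {H : SimpleGraph W} : Finite (G ≃g H) :=
  DFunLike.finite _

namespace IsEdgeTransitive

variable {G}

theorem apply_eq_of_adj (hG : G.IsEdgeTransitive) {M : Matrix V V ℝ}
    (hM : ∀ (f : G ≃g G) u v, M (f u) (f v) = M u v) (hMsymm : ∀ u v, M u v = M v u)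
    {a b u v : V} (hab : G.Adj a b) (huv : G.Adj u v) : M u v = M a b := by
  obtain ⟨f, ⟨rfl, rfl⟩ | ⟨rfl, rfl⟩⟩ := hG hab huv
  · exact hM f a b
  · rw [hM, hMsymm]

open Classical in
/-- If no automorphism maps `a` to its neighbour `b`, then every edge has exactly one endpoint
in the orbit of `a`. -/
noncomputable def orbitColoring (hG : G.IsEdgeTransitive) {a b : V} (hab : G.Adj a b)
    (horb : ¬∃ f : G ≃g G, f a = b) : G.Coloring Bool :=
  Coloring.mk (fun v => decide (∃ f : G ≃g G, f a = v)) fun {u v} huv => by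
    have hb : ∀ f : G ≃g G, ¬∃ g : G ≃g G, g a = f b := fun f ⟨g, hg⟩ =>
      horb ⟨g.trans f.symm, by simp [hg]⟩
    obtain ⟨f, ⟨rfl, rfl⟩ | ⟨rfl, rfl⟩⟩ := hG hab huv
    all_goals simp only [ne_eq, decide_eq_decide]
    · exact fun h => hb f (h.mp ⟨f, rfl⟩)
    · exact fun h => hb f (h.mpr ⟨f, rfl⟩)

end IsEdgeTransitive

namespace Coloring

variable {G}

def signVector (c : G.Coloring Bool) (v : V) : ℝ := if c v then 1 else -1

theorem signVector_mul_self (c : G.Coloring Bool) (v : V) :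
    c.signVector v * c.signVector v = 1 := by
  unfold signVector; split_ifs <;> norm_num

theorem signVector_mul_signVector_of_adj (c : G.Coloring Bool) {u v : V} (h : G.Adj u v) :
    c.signVector u * c.signVector v = -1 := by
  have := c.valid h
  unfold signVector; revert this; cases c u <;> cases c v <;> norm_num

theorem signVector_mul_ne_zero (c : G.Coloring Bool) {x : V → ℝ} (hx : x ≠ 0) :
    c.signVector * x ≠ 0 := by
  refine fun h => hx (funext fun v => ?_)
  have hs : c.signVector v ≠ 0 := by unfold signVector; split_ifs <;> norm_num
  exact (mul_eq_zero.mp (congrFun h v)).resolve_left hs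

end Coloring

section autAverage

variable [Fintype (G ≃g G)]

/-- Sum of `(x ∘ f⁻¹)(x ∘ f⁻¹)ᵀ` over all automorphisms `f`. -/
noncomputable def autAverage (x : V → ℝ) : Matrix V V ℝ :=
  ∑ f : G ≃g G, vecMulVec (x ∘ f.symm) (x ∘ f.symm)

theorem autAverage_apply (x : V → ℝ) (u v : V) :
    G.autAverage x u v = ∑ f : G ≃g G, x (f.symm u) * x (f.symm v) := by
  simp [autAverage, Matrix.sum_apply, vecMulVec_apply]

theorem posSemidef_autAverage [Finite V] (x : V → ℝ) : (G.autAverage x).PosSemidef :=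
  posSemidef_sum _ fun _ _ => posSemidef_vecMulVec_self_star _

theorem autAverage_apply_comm (x : V → ℝ) (u v : V) :
    G.autAverage x u v = G.autAverage x v u := by
  simp only [autAverage_apply, mul_comm]

theorem autAverage_apply_iso (x : V → ℝ) (g : G ≃g G) (u v : V) :
    G.autAverage x (g u) (g v) = G.autAverage x u v := by
  simp only [autAverage_apply]
  refine Fintype.sum_equiv (Equiv.mulLeft g⁻¹) _ _ fun f => ?_
  change _ = x ((g⁻¹ * f)⁻¹ u) * x ((g⁻¹ * f)⁻¹ v)
  rw [_root_.mul_inv_rev, inv_inv]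
  rfl

theorem sq_le_autAverage_apply_self (x : V → ℝ) (v : V) : x v ^ 2 ≤ G.autAverage x v v := by
  rw [autAverage_apply, sq]
  exact Finset.single_le_sum (f := fun f : G ≃g G => x (f.symm v) * x (f.symm v))
    (fun _ _ => mul_self_nonneg _) (Finset.mem_univ 1)

end autAverage

variable [Fintype V] [DecidableRel G.Adj]

theorem adjMatrix_mulVec_comp_iso (f : G ≃g G) (x : V → ℝ) :
    G.adjMatrix ℝ *ᵥ (x ∘ f) = (G.adjMatrix ℝ *ᵥ x) ∘ f := by
  funext v
  simp only [Function.comp_apply, adjMatrix_mulVec_apply]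
  exact Finset.sum_equiv f.toEquiv (fun u => by simpa using f.map_adj_iff.symm) fun _ _ => rfl

theorem adjMatrix_mul_autAverage [Fintype (G ≃g G)] {τ : ℝ} {x : V → ℝ}
    (hx : G.adjMatrix ℝ *ᵥ x = τ • x) :
    G.adjMatrix ℝ * G.autAverage x = τ • G.autAverage x := by
  simp only [autAverage, Finset.mul_sum, Finset.smul_sum, mul_vecMulVec]
  refine Finset.sum_congr rfl fun f _ => ?_
  rw [adjMatrix_mulVec_comp_iso G f.symm, hx]
  ext i j
  simp [vecMulVec_apply, mul_assoc]

theorem IsEdgeTransitive.degree_eq_of_adj {G : SimpleGraph V} [DecidableRel G.Adj]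
    (hG : G.IsEdgeTransitive) {a b u v : V} (hab : G.Adj a b) (horb : ∃ f : G ≃g G, f a = b)
    (huv : G.Adj u v) : G.degree u = G.degree a := by
  obtain ⟨g, hg⟩ := horb
  obtain ⟨f, ⟨rfl, -⟩ | ⟨-, rfl⟩⟩ := hG hab huv
  · exact f.degree_eq a
  · rw [← hg]
    exact Iso.degree_eq (g.trans f) a

theorem degree_le_of_degree_eq_of_adj {lam : ℝ}
    (hgreatest : ∀ (μ : ℝ) (x : V → ℝ), x ≠ 0 → G.adjMatrix ℝ *ᵥ x = μ • x → μ ≤ lam)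
    {a b : V} (hab : G.Adj a b) (hk : ∀ u v, G.Adj u v → G.degree u = G.degree a) (v : V) :
    (G.degree v : ℝ) ≤ lam := by
  set d : V → ℝ := fun v => G.degree v
  have hd : G.adjMatrix ℝ *ᵥ d = (G.degree a : ℝ) • d := by
    funext v
    rw [adjMatrix_mulVec_apply, Finset.sum_congr rfl fun u hu =>
      congrArg Nat.cast (hk u v ((G.mem_neighborFinset v u).mp hu).symm)]
    simp [d, mul_comm]
  have hka : (G.degree a : ℝ) ≤ lam := by
    refine hgreatest _ d (fun h => ?_) hd
    have : G.degree a = 0 := by simpa [d] using congrFun h a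
    exact (G.degree_pos_iff_exists_adj a).mpr ⟨b, hab⟩ |>.ne' this
  obtain hv | ⟨w, hvw⟩ := (G.degree v).eq_zero_or_pos.imp id (G.degree_pos_iff_exists_adj v).mp
  · rw [hv, Nat.cast_zero]
    exact (Nat.cast_nonneg _).trans hka
  · rwa [hk v w hvw]

theorem eq_zero_of_mulVec_eq_smul_of_forall_not_adj (hE : ∀ u v, ¬G.Adj u v) {μ : ℝ}
    {x : V → ℝ} (hx₀ : x ≠ 0) (hx : G.adjMatrix ℝ *ᵥ x = μ • x) : μ = 0 := by
  have hA : G.adjMatrix ℝ = 0 := by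
    ext u v
    simp [adjMatrix_apply, hE u v]
  rw [hA, zero_mulVec] at hx
  exact (smul_eq_zero.mp hx.symm).resolve_right hx₀

namespace Coloring

variable {G}

theorem adjMatrix_mulVec_signVector_mul (c : G.Coloring Bool) (x : V → ℝ) :
    G.adjMatrix ℝ *ᵥ (c.signVector * x) = -(c.signVector * G.adjMatrix ℝ *ᵥ x) := by
  funext v
  have hflip : ∀ u, G.Adj v u → c.signVector u = -c.signVector v := fun u h => by
    linear_combination -c.signVector u * c.signVector_mul_self v +
      c.signVector v * c.signVector_mul_signVector_of_adj h
  simp only [adjMatrix_mulVec_apply, Pi.mul_apply, Pi.neg_apply, Finset.mul_sum,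
    ← Finset.sum_neg_distrib]
  exact Finset.sum_congr rfl fun u hu => by
    rw [hflip u ((G.mem_neighborFinset v u).mp hu)]; ring

theorem signVector_mul_mulVec_eq_neg_smul (c : G.Coloring Bool) {μ : ℝ} {x : V → ℝ}
    (hx : G.adjMatrix ℝ *ᵥ x = μ • x) :
    G.adjMatrix ℝ *ᵥ (c.signVector * x) = (-μ) • (c.signVector * x) := by
  rw [adjMatrix_mulVec_signVector_mul, hx, mul_smul_comm, neg_smul]

theorem exists_thetaBar_matrix (c : G.Coloring Bool) {lam τ : ℝ} (hτ : τ ≠ 0)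
    (hgeig : ∃ x : V → ℝ, x ≠ 0 ∧ G.adjMatrix ℝ *ᵥ x = lam • x)
    (hgreatest : ∀ (μ : ℝ) (x : V → ℝ), x ≠ 0 → G.adjMatrix ℝ *ᵥ x = μ • x → μ ≤ lam)
    (hleig : ∃ x : V → ℝ, x ≠ 0 ∧ G.adjMatrix ℝ *ᵥ x = τ • x)
    (hleast : ∀ (μ : ℝ) (x : V → ℝ), x ≠ 0 → G.adjMatrix ℝ *ᵥ x = μ • x → τ ≤ μ) :
    ∃ N : Matrix V V ℝ, N.PosSemidef ∧ (∀ v, N v v = (1 - lam / τ) - 1) ∧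
      ∀ u v, G.Adj u v → N u v = -1 := by
  have hlam : lam = -τ := by
    obtain ⟨x, hx₀, hx⟩ := hleig
    obtain ⟨y, hy₀, hy⟩ := hgeig
    have h₁ := hgreatest _ _ (c.signVector_mul_ne_zero hx₀) (c.signVector_mul_mulVec_eq_neg_smul hx)
    have h₂ := hleast _ _ (c.signVector_mul_ne_zero hy₀) (c.signVector_mul_mulVec_eq_neg_smul hy)
    linarith
  refine ⟨vecMulVec c.signVector c.signVector, posSemidef_vecMulVec_self_star _, fun v => ?_,
    fun u v huv => ?_⟩
  · rw [vecMulVec_apply, signVector_mul_self, hlam, neg_div, div_self hτ]; norm_num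
  · rw [vecMulVec_apply, signVector_mul_signVector_of_adj c huv]

end Coloring

variable [DecidableEq V]

theorem le_neg_one_of_adj {τ : ℝ} (hτ : (G.adjMatrix ℝ - τ • 1).PosSemidef) {a b : V}
    (hab : G.Adj a b) : τ ≤ -1 := by
  have h := hτ.mul_dotProduct_self_le (Pi.single a 1 - Pi.single b 1)
  simp [sub_dotProduct, dotProduct_sub, mulVec_sub, mulVec_single, adjMatrix_apply, hab,
    hab.symm, hab.ne, hab.ne.symm] at h
  linarith

/-- Hoffman's bound for the vector chromatic number. -/
theorem one_sub_div_le_of_vectorColoring {lam τ s : ℝ} (hτ : τ < 0)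
    (hA : (G.adjMatrix ℝ - τ • 1).PosSemidef) {x : V → ℝ} (hx₀ : x ≠ 0)
    (hx : G.adjMatrix ℝ *ᵥ x = lam • x) {M : Matrix V V ℝ} (hM : M.PosSemidef)
    (hdiag : ∀ v, M v v = s - 1) (hedge : ∀ u v, G.Adj u v → M u v ≤ -1) :
    1 - lam / τ ≤ s := by
  have hsplit : M ⊙ (G.adjMatrix ℝ - τ • 1) = M ⊙ G.adjMatrix ℝ + (-τ * (s - 1)) • 1 := by
    ext i j
    rcases eq_or_ne i j with rfl | hij
    · simp [hdiag]; ring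
    · simp [hij]
  have hedges : |x| ⬝ᵥ (M ⊙ G.adjMatrix ℝ) *ᵥ |x| ≤ |x| ⬝ᵥ (-G.adjMatrix ℝ) *ᵥ |x| := by
    refine dotProduct_mulVec_le_of_le (fun i j => ?_) (abs_nonneg x)
    by_cases hij : G.Adj i j <;> simp [hij, hedge i j]
  have hlam : lam * (x ⬝ᵥ x) ≤ |x| ⬝ᵥ G.adjMatrix ℝ *ᵥ |x| := by
    rw [← smul_eq_mul, ← dotProduct_smul, ← hx]
    exact dotProduct_mulVec_le_abs (fun i j => by by_cases h : G.Adj i j <;> simp [h]) x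
  have hQ := (hM.hadamard hA).dotProduct_mulVec_nonneg |x|
  rw [star_trivial, hsplit, add_mulVec, dotProduct_add, smul_mulVec, one_mulVec,
    dotProduct_smul, smul_eq_mul] at hQ
  rw [neg_mulVec, dotProduct_neg] at hedges
  have hxx : 0 < x ⬝ᵥ x := by simpa using dotProduct_self_star_pos_iff.mpr hx₀
  have habs : |x| ⬝ᵥ |x| = x ⬝ᵥ x := by simp [dotProduct]
  rw [habs] at hQ
  have : lam ≤ τ * (1 - s) := by nlinarith
  rw [sub_le_comm, le_div_iff_of_neg hτ]
  linarith

theorem exists_thetaBar_matrix_of_adjMatrix_mul_eq_smul {lam τ c : ℝ} (hτ : τ < 0)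
    (hdeg : ∀ v, (G.degree v : ℝ) ≤ lam) {M : Matrix V V ℝ} (hM : M.PosSemidef)
    (hAM : G.adjMatrix ℝ * M = τ • M) (hedge : ∀ u v, G.Adj u v → M u v = c) {w : V}
    (hw : 0 < M w w) :
    ∃ N : Matrix V V ℝ, N.PosSemidef ∧ (∀ v, N v v = (1 - lam / τ) - 1) ∧
      ∀ u v, G.Adj u v → N u v = -1 := by
  have hdiag : ∀ v, τ * M v v = G.degree v * c := by
    intro v
    have := congrFun (congrFun hAM v) v
    rw [adjMatrix_mul_apply, Finset.sum_congr rfl fun u hu =>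
      hedge u v ((G.mem_neighborFinset v u).mp hu).symm] at this
    simpa using this.symm
  have hc : c < 0 := by
    have : (G.degree w : ℝ) * c < 0 := by rw [← hdiag]; exact mul_neg_of_neg_of_pos hτ hw
    exact neg_of_mul_neg_right this (Nat.cast_nonneg _)
  refine ⟨(-c)⁻¹ • M + diagonal fun v => (G.degree v - lam) / τ, ?_, fun v => ?_,
    fun u v huv => ?_⟩
  · refine (hM.smul (inv_nonneg.mpr (neg_nonneg.mpr hc.le))).add
      (posSemidef_diagonal_iff.mpr fun v => div_nonneg_of_nonpos ?_ hτ.le)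
    linarith [hdeg v]
  · have hMv : M v v = G.degree v * c / τ := by rw [← hdiag, mul_div_cancel_left₀ _ hτ.ne]
    simp only [Matrix.add_apply, Matrix.smul_apply, diagonal_apply_eq, smul_eq_mul, hMv]
    field_simp [hc.ne]
    ring
  · simp [hedge u v huv, huv.ne, hc.ne]

theorem IsEdgeTransitive.exists_thetaBar_matrix_of_exists_iso {G : SimpleGraph V}
    [DecidableRel G.Adj] (hG : G.IsEdgeTransitive) {a b : V} (hab : G.Adj a b)
    (horb : ∃ f : G ≃g G, f a = b) {lam τ : ℝ} (hτ : τ < 0)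
    (hgreatest : ∀ (μ : ℝ) (x : V → ℝ), x ≠ 0 → G.adjMatrix ℝ *ᵥ x = μ • x → μ ≤ lam)
    (hleig : ∃ x : V → ℝ, x ≠ 0 ∧ G.adjMatrix ℝ *ᵥ x = τ • x) :
    ∃ N : Matrix V V ℝ, N.PosSemidef ∧ (∀ v, N v v = (1 - lam / τ) - 1) ∧
      ∀ u v, G.Adj u v → N u v = -1 := by
  have := Fintype.ofFinite (G ≃g G)
  obtain ⟨x, hx₀, hx⟩ := hleig
  obtain ⟨w, hw⟩ := Function.ne_iff.mp hx₀
  refine G.exists_thetaBar_matrix_of_adjMatrix_mul_eq_smul hτ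
    (G.degree_le_of_degree_eq_of_adj hgreatest hab fun _ _ => hG.degree_eq_of_adj hab horb)
    (G.posSemidef_autAverage x) (G.adjMatrix_mul_autAverage hx)
    (fun _ _ => hG.apply_eq_of_adj (G.autAverage_apply_iso x) (G.autAverage_apply_comm x) hab)
    (w := w) ?_
  exact (pow_pos (abs_pos.mpr hw) 2 |>.trans_eq (sq_abs _)).trans_le
    (G.sq_le_autAverage_apply_self x w)

end SimpleGraph

open SimpleGraph in
theorem stmt15 {V : Type} [Fintype V]
    (G : SimpleGraph V) [DecidableRel G.Adj] (lam τ : ℝ)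
    (hET : ∀ ⦃u v x y : V⦄, G.Adj u v → G.Adj x y →
      ∃ f : G ≃g G, (f u = x ∧ f v = y) ∨ (f u = y ∧ f v = x))
    (hgeig : ∃ x : V → ℝ, x ≠ 0 ∧ (G.adjMatrix ℝ).mulVec x = lam • x)
    (hgreatest : ∀ (μ : ℝ) (x : V → ℝ), x ≠ 0 →
      (G.adjMatrix ℝ).mulVec x = μ • x → μ ≤ lam)
    (hleig : ∃ x : V → ℝ, x ≠ 0 ∧ (G.adjMatrix ℝ).mulVec x = τ • x)
    (hleast : ∀ (μ : ℝ) (x : V → ℝ), x ≠ 0 →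
      (G.adjMatrix ℝ).mulVec x = μ • x → τ ≤ μ) :
    chiVecSDP G = 1 - lam / τ ∧ thetaBarSDP G = 1 - lam / τ := by
  classical
  obtain ⟨x, hx₀, hx⟩ := id hgeig
  have hA := (G.isHermitian_adjMatrix ℝ).posSemidef_sub_smul_one hleast
  by_cases hE : ∃ a b, G.Adj a b
  · obtain ⟨a, b, hab⟩ := hE
    have hτ : τ < 0 := (G.le_neg_one_of_adj hA hab).trans_lt (by norm_num)
    refine chiVecSDP_eq_and_thetaBarSDP_eq G ?_ fun s M hM hdiag hedge =>
      G.one_sub_div_le_of_vectorColoring hτ hA hx₀ hx hM hdiag hedge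
    by_cases horb : ∃ f : G ≃g G, f a = b
    · exact IsEdgeTransitive.exists_thetaBar_matrix_of_exists_iso hET hab horb hτ hgreatest hleig
    · exact (IsEdgeTransitive.orbitColoring hET hab horb).exists_thetaBar_matrix hτ.ne hgeig
        hgreatest hleig hleast
  · simp only [not_exists] at hE
    obtain ⟨y, hy₀, hy⟩ := hleig
    -- without edges `lam = τ = 0`, and Lean's `0 / 0 = 0` makes the right-hand side `1`
    rw [G.eq_zero_of_mulVec_eq_smul_of_forall_not_adj hE hx₀ hx,
      G.eq_zero_of_mulVec_eq_smul_of_forall_not_adj hE hy₀ hy, div_zero, sub_zero]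
    obtain ⟨v, -⟩ := Function.ne_iff.mp hx₀
    refine chiVecSDP_eq_and_thetaBarSDP_eq G ⟨0, .zero, by simp, fun u w h => (hE u w h).elim⟩
      fun s M hM hdiag _ => ?_
    linarith [hdiag v, hM.diag_nonneg (i := v)]
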